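/- In the UCB1 selection rule with finitely many actions, each action is selected infinitely often: if at each step one selects an action a minimizing Ĉ(a) - e·√(2·ln(N)/N_a) with e > 0 and Ĉ taking values in [0,1], and N_a is incremented for the selected action while N is the total number of selections, then for every action a, N_a → ∞ as the number of steps goes to infinity. -/
import Mathlib


open Filter

/-- Under the UCB1 selection rule with finitely many actions,
exploration constant `e > 0`, and cost estimates in `[0,1]`, every action is
selected infinitely often: its counter tends to infinity. -/
theorem ucb1_selects_every_action_infinitely_often
    {A : Type*} [Fintype A] [Nonempty A] [DecidableEq A]
    (e : ℝ) (he : 0 < e)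
    (Chat : ℕ → A → ℝ) (hChat : ∀ n a, Chat n a ∈ Set.Icc (0 : ℝ) 1)
    (count : ℕ → A → ℕ) (sel : ℕ → A)
    -- each arm is pulled at least once initially
    (hinit : ∀ a, 1 ≤ count 0 a)
    -- the counter of the selected action increments, others are unchanged
    (hcount : ∀ n a, count (n + 1) a = count n a + if sel n = a then 1 else 0)
    -- `N` is the total number of selections so far
    (total : ℕ → ℕ) (htotal : ∀ n, total n = ∑ a, count n a)
    -- the selected action minimizes the UCB1 value
    (hsel : ∀ n b,
      Chat n (sel n) - e * Real.sqrt (2 * Real.log (total n) / (count n (sel n) : ℝ))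
        ≤ Chat n b - e * Real.sqrt (2 * Real.log (total n) / (count n b : ℝ))) :
    ∀ a, Tendsto (fun n => count n a) atTop atTop := by
  -- monotonicity of counters
  have hmono : ∀ a, Monotone (fun n => count n a) := by
    intro a
    apply monotone_nat_of_le_succ
    intro n
    rw [hcount]
    split <;> omega
  have hpos : ∀ n a, 1 ≤ count n a := fun n a => (hinit a).trans (hmono a (Nat.zero_le n))
  -- lower bound for counters via selections in a window
  have hwindow : ∀ (b : A) (n0 n : ℕ), n0 ≤ n →
      count n0 b + ((Finset.Ico n0 n).filter (fun m => sel m = b)).card ≤ count n b := by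
    intro b n0 n h
    induction n with
    | zero =>
      interval_cases n0
      simp
    | succ n ih =>
      rcases Nat.lt_or_ge n0 (n + 1) with h' | h'
      · have hle : n0 ≤ n := Nat.lt_succ_iff.mp h'
        have := ih hle
        rw [Nat.Ico_succ_right_eq_insert_Ico hle, Finset.filter_insert, hcount]
        by_cases hs : sel n = b
        · rw [if_pos hs, if_pos hs, Finset.card_insert_of_notMem (by simp)]
          omega
        · rw [if_neg hs, if_neg hs]
          simpa using this
      · have hEq : n0 = n + 1 := by omega
        subst hEq
        simp
  -- total grows by one each step
  have htotS : ∀ n, total n = total 0 + n := by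
    intro n
    induction n with
    | zero => rfl
    | succ n ih =>
      have : total (n + 1) = total n + 1 := by
        rw [htotal, htotal]
        have : ∑ a, count (n+1) a = ∑ a, (count n a + if sel n = a then 1 else 0) := by
          apply Finset.sum_congr rfl
          intro a _
          rw [hcount]
        rw [this, Finset.sum_add_distrib, Finset.sum_ite_eq]
        simp
      omega
  have htot1 : ∀ n, 1 ≤ total n := by
    intro n
    rw [htotal]
    calc 1 ≤ Fintype.card A := Fintype.card_pos
    _ = ∑ _a : A, 1 := by rw [← Finset.card_univ, Finset.card_eq_sum_ones]
    _ ≤ ∑ a, count n a := Finset.sum_le_sum (fun a _ => hpos n a)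
  -- the counter of the selected arm is unbounded
  have hfub : ∀ n0 M : ℕ, ∃ n, n0 ≤ n ∧ M + 1 ≤ count n (sel n) := by
    intro n0 M
    by_contra hcon
    push_neg at hcon
    -- pigeonhole on a window of length card A * M + 1
    set N1 := n0 + Fintype.card A * M + 1 with hN1
    have hmaps : ∀ m ∈ Finset.Ico n0 N1, sel m ∈ (Finset.univ : Finset A) := by
      intro m _; exact Finset.mem_univ _
    have hcard : (Finset.univ : Finset A).card * M < (Finset.Ico n0 N1).card := by
      rw [Nat.card_Ico, Finset.card_univ]
      omega
    obtain ⟨b, -, hb⟩ := Finset.exists_lt_card_fiber_of_mul_lt_card_of_maps_to hmaps hcard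
    set T := (Finset.Ico n0 N1).filter (fun m => sel m = b) with hT
    have hTne : T.Nonempty := Finset.card_pos.mp (by omega)
    set m' := T.max' hTne with hm'
    have hm'T : m' ∈ T := T.max'_mem hTne
    have hm'Ico : m' ∈ Finset.Ico n0 N1 := Finset.mem_filter.mp hm'T |>.1
    have hm'sel : sel m' = b := Finset.mem_filter.mp hm'T |>.2
    have hsub : T.erase m' ⊆ (Finset.Ico n0 m').filter (fun m => sel m = b) := by
      intro x hx
      have hx1 := Finset.mem_erase.mp hx
      have hx2 := Finset.mem_filter.mp hx1.2
      have hx3 := Finset.mem_Ico.mp hx2.1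
      refine Finset.mem_filter.mpr ⟨Finset.mem_Ico.mpr ⟨hx3.1, ?_⟩, hx2.2⟩
      have : x ≤ m' := T.le_max' x hx1.2
      omega
    have hcarde : M ≤ (T.erase m').card := by
      rw [Finset.card_erase_of_mem hm'T]
      omega
    have hn0m' : n0 ≤ m' := (Finset.mem_Ico.mp hm'Ico).1
    have hlow := hwindow b n0 m' hn0m'
    have hcard2 : M ≤ ((Finset.Ico n0 m').filter (fun m => sel m = b)).card :=
      hcarde.trans (Finset.card_le_card hsub)
    have := hcon m' hn0m'
    rw [hm'sel] at this
    have := hpos n0 b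
    omega
  intro a
  apply tendsto_atTop_atTop_of_monotone (hmono a)
  by_contra hB
  push_neg at hB
  obtain ⟨C, hC⟩ := hB
  have hCb : ∀ n, count n a ≤ C := fun n => (hC n).le
  have hC1 : 1 ≤ C := le_trans (hpos 0 a) (hCb 0)
  -- eventually `a` is not selected
  have hne : ∃ n1, ∀ n, n1 ≤ n → sel n ≠ a := by
    by_contra hcon
    push_neg at hcon
    have key : ∀ k : ℕ, ∃ n, k ≤ count n a := by
      intro k
      induction k with
      | zero => exact ⟨0, Nat.zero_le _⟩
      | succ k ih =>
        obtain ⟨n, hn⟩ := ih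
        obtain ⟨m, hm, hmsel⟩ := hcon n
        refine ⟨m + 1, ?_⟩
        have h1 := hcount m a
        rw [if_pos hmsel] at h1
        have := hmono a hm
        simp only at this
        omega
    obtain ⟨n, hn⟩ := key (C + 1)
    exact absurd (hCb n) (by omega)
  obtain ⟨n1, hn1⟩ := hne
  -- choose a time far enough so that the log term is large
  set t := Real.exp (2 * C / e ^ 2 + 1) with ht
  set n2 := Nat.ceil t with hn2
  obtain ⟨n, hn, hFn⟩ := hfub (max n1 n2) (4 * C)
  set F := count n (sel n) with hF
  set L := Real.log (total n) with hL
  have htpos : 0 < t := Real.exp_pos _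
  have hn2t : t ≤ (n2 : ℝ) := Nat.le_ceil t
  have htotn : (t : ℝ) ≤ (total n : ℝ) := by
    have : n2 ≤ total n := by
      have := htotS n
      have h1 := htot1 0
      have : total n = total 0 + n := htotS n
      omega
    calc t ≤ (n2 : ℝ) := hn2t
    _ ≤ (total n : ℝ) := by exact_mod_cast this
  have hLlarge : 2 * C / e ^ 2 + 1 ≤ L := by
    rw [hL]
    calc 2 * C / e ^ 2 + 1 = Real.log t := (Real.log_exp _).symm
    _ ≤ Real.log (total n) := Real.log_le_log htpos htotn
  have hLpos : 0 < L := by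
    have hCpos : (0:ℝ) < C := by exact_mod_cast hC1
    have : 0 < 2 * C / e ^ 2 := by positivity
    linarith
  -- key inequalities
  have hCpos : (0:ℝ) < (C : ℝ) := by exact_mod_cast hC1
  have hcna : (1:ℝ) ≤ (count n a : ℝ) := by exact_mod_cast hpos n a
  have hcnaC : (count n a : ℝ) ≤ (C : ℝ) := by exact_mod_cast hCb n
  have hF4C : (4 * C : ℝ) ≤ (F : ℝ) := by exact_mod_cast le_trans (by omega) hFn
  have hs1 : Real.sqrt (2 * L / (C : ℝ)) ≤ Real.sqrt (2 * L / (count n a : ℝ)) := by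
    apply Real.sqrt_le_sqrt
    apply div_le_div_of_nonneg_left (by linarith) (by linarith) hcnaC
  have hs2 : Real.sqrt (2 * L / (F : ℝ)) ≤ Real.sqrt (2 * L / (4 * C : ℝ)) := by
    apply Real.sqrt_le_sqrt
    apply div_le_div_of_nonneg_left (by linarith) (by positivity) hF4C
  have hs3 : Real.sqrt (2 * L / (4 * C : ℝ)) = Real.sqrt (2 * L / (C : ℝ)) / 2 := by
    rw [show 2 * L / (4 * (C : ℝ)) = (2 * L / (C : ℝ)) / 4 by ring]
    rw [Real.sqrt_div (by positivity) 4]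
    rw [show (4:ℝ) = 2 ^ 2 by norm_num, Real.sqrt_sq (by norm_num)]
  set s := Real.sqrt (2 * L / (C : ℝ)) with hsdef
  have hsbig : 2 / e < s := by
    have h1 : (2 / e) ^ 2 < 2 * L / (C : ℝ) := by
      rw [div_pow]
      rw [div_lt_div_iff₀ (by positivity) hCpos]
      have : 2 * C / e ^ 2 < L := by linarith
      rw [div_lt_iff₀ (by positivity)] at this
      nlinarith
    exact (Real.lt_sqrt (by positivity)).mpr h1
  -- use the selection inequality at time n
  have hineq := hsel n a
  have hCh1 := hChat n a
  have hCh2 := hChat n (sel n)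
  simp only [Set.mem_Icc] at hCh1 hCh2
  have hmain : e * s ≤ 1 + e * (s / 2) := by
    have h1 : e * Real.sqrt (2 * L / (count n a : ℝ)) ≤
        (Chat n a - Chat n (sel n)) + e * Real.sqrt (2 * L / (F : ℝ)) := by
      rw [hL, hF]
      linarith [hineq]
    have h2 : e * s ≤ e * Real.sqrt (2 * L / (count n a : ℝ)) :=
      mul_le_mul_of_nonneg_left hs1 he.le
    have h3 : e * Real.sqrt (2 * L / (F : ℝ)) ≤ e * (s / 2) := by
      rw [hsdef, ← hs3]
      exact mul_le_mul_of_nonneg_left hs2 he.le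
    have h4 : Chat n a - Chat n (sel n) ≤ 1 := by linarith
    linarith
  have : s ≤ 2 / e := by
    rw [le_div_iff₀ he]
    nlinarith
  linarith
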